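/- For a matrix A in SU(1,1;ℂ), η(A) is the 3×3 identity matrix if and only if A = I or A = −I; that is, the kernel of η is {±I}, so η is two-to-one onto its image. -/

import Mathlib

/-!
The entries `(2,2)` and `(0,0)` of `η(A)` are `1 + 2|b|²` and `1 - 2a₂² + 2b₁²`, so `η(A) = 1`
forces `b = 0` and `a` real. For `A ∈ SU(1,1)`, `A*JA = J` and `det A = 1` give
`J A* J = A⁻¹ = adj A`, which pins `A` to the form `[[a, b], [b̄, ā]]`; hence `A = a • 1` with
`a² = det A = 1`. Conversely, `η` is even and `η(1) = 1`.
-/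

open Matrix

noncomputable section

/-- The matrix `J = diag(1, -1)` in `M₂(ℂ)`. -/
def Jc : Matrix (Fin 2) (Fin 2) ℂ := !![1, 0; 0, -1]

/-- `SU(1,1;ℂ) = {A ∈ M₂(ℂ) : A*JA = J and det A = 1}`. -/
def SU11C : Set (Matrix (Fin 2) (Fin 2) ℂ) := {A | Aᴴ * Jc * A = Jc ∧ A.det = 1}

/-- The double covering map `η : SU(1,1;ℂ) → SO⁺(2,1)`, written with
`a = A₀₀ = a₁ + a₂ i` and `b = A₀₁ = b₁ + b₂ i`. -/
def eta (A : Matrix (Fin 2) (Fin 2) ℂ) : Matrix (Fin 3) (Fin 3) ℝ :=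
  let a1 := (A 0 0).re; let a2 := (A 0 0).im
  let b1 := (A 0 1).re; let b2 := (A 0 1).im
  !![1 - 2*a2^2 + 2*b1^2, -2*a1*a2 + 2*b1*b2, 2*a1*b1 - 2*a2*b2;
     2*a1*a2 + 2*b1*b2, 1 - 2*a2^2 + 2*b2^2, 2*a1*b2 + 2*a2*b1;
     2*a1*b1 + 2*a2*b2, 2*a1*b2 - 2*a2*b1, 1 + 2*b1^2 + 2*b2^2]

open ComplexConjugate

theorem Jc_mul_self : Jc * Jc = 1 := by
  ext i j; fin_cases i <;> fin_cases j <;> simp [Jc]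

theorem Jc_mul_conjTranspose_mul_Jc (A : Matrix (Fin 2) (Fin 2) ℂ) :
    Jc * Aᴴ * Jc = !![conj (A 0 0), -conj (A 1 0); -conj (A 0 1), conj (A 1 1)] := by
  ext i j
  fin_cases i <;> fin_cases j <;> simp [Jc, mul_apply, vecMul, dotProduct, Fin.sum_univ_two]

theorem Jc_mul_conjTranspose_mul_Jc_of_mem {A : Matrix (Fin 2) (Fin 2) ℂ} (hA : A ∈ SU11C) :
    Jc * Aᴴ * Jc = A.adjugate := by
  obtain ⟨hJ, hdet⟩ := hA
  have hleft : Jc * Aᴴ * Jc * A = 1 := by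
    rw [Matrix.mul_assoc (Jc * Aᴴ), Matrix.mul_assoc Jc, ← Matrix.mul_assoc Aᴴ, hJ, Jc_mul_self]
  rw [← inv_eq_left_inv hleft, inv_def, hdet, Ring.inverse_one, one_smul]

theorem eq_of_mem_SU11C {A : Matrix (Fin 2) (Fin 2) ℂ} (hA : A ∈ SU11C) :
    A = !![A 0 0, A 0 1; conj (A 0 1), conj (A 0 0)] := by
  have h := Jc_mul_conjTranspose_mul_Jc_of_mem hA
  rw [Jc_mul_conjTranspose_mul_Jc, adjugate_fin_two] at h
  have h00 : conj (A 0 0) = A 1 1 := congrFun (congrFun h 0) 0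
  have h01 : conj (A 1 0) = A 0 1 := neg_inj.mp (congrFun (congrFun h 0) 1)
  ext i j; fin_cases i <;> fin_cases j <;> simp [h00, ← h01]

theorem eta_neg (A : Matrix (Fin 2) (Fin 2) ℂ) : eta (-A) = eta A := by
  simp [eta]

theorem eta_one : eta 1 = 1 := by
  ext i j; fin_cases i <;> fin_cases j <;> simp [eta]

theorem eq_zero_and_im_eq_zero_of_eta_eq_one {A : Matrix (Fin 2) (Fin 2) ℂ} (h : eta A = 1) :
    A 0 1 = 0 ∧ (A 0 0).im = 0 := by
  have h22 : 1 + 2 * (A 0 1).re ^ 2 + 2 * (A 0 1).im ^ 2 = 1 := congrFun (congrFun h 2) 2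
  have h00 : 1 - 2 * (A 0 0).im ^ 2 + 2 * (A 0 1).re ^ 2 = 1 := congrFun (congrFun h 0) 0
  have hb1 : (A 0 1).re = 0 := by nlinarith [sq_nonneg (A 0 1).im]
  have hb2 : (A 0 1).im = 0 := by nlinarith [sq_nonneg (A 0 1).re]
  exact ⟨Complex.ext hb1 hb2, by nlinarith⟩

theorem stmt17 (A : Matrix (Fin 2) (Fin 2) ℂ) (hA : A ∈ SU11C) :
    eta A = 1 ↔ (A = 1 ∨ A = -1) := by
  constructor
  · intro h
    obtain ⟨hb, ha⟩ := eq_zero_and_im_eq_zero_of_eta_eq_one h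
    have hA_smul : A = A 0 0 • 1 := by
      conv_lhs => rw [eq_of_mem_SU11C hA, hb, Complex.conj_eq_iff_im.mpr ha]
      ext i j; fin_cases i <;> fin_cases j <;> simp
    have hsq : A 0 0 * A 0 0 = 1 := by
      have hdet := hA.2
      rwa [hA_smul, det_smul, det_one, mul_one, Fintype.card_fin, sq] at hdet
    rcases mul_self_eq_one_iff.mp hsq with h1 | h1
    · left; rw [hA_smul, h1, one_smul]
    · right; rw [hA_smul, h1, neg_one_smul]
  · rintro (rfl | rfl)
    exacts [eta_one, (eta_neg 1).trans eta_one]
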